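/- Let φ be an analytic selfmap of 𝔻, g ∈ H(𝔻), and let v be a normal weight. If g∘φ ∈ H_v^0, then T_g^φ(f_r) ∈ H_v^0 for every f ∈ H(𝔻) and every 0 < r < 1, where f_r(z) = f(rz). Likewise, for any weight v, if g∘φ ∈ B_v^0 then T_g^φ(f_r) ∈ B_v^0 for every f ∈ H(𝔻) and 0 < r < 1. -/

import Mathlib

noncomputable section

open Complex MeasureTheory Metric Set Filter Topology

/-- The open unit disc in `ℂ`. -/
def uDisc : Set ℂ := Metric.ball 0 1

/-- Functions on the disc carrying the topology of uniform convergence on compact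
subsets of the disc (i.e. the compact-open topology on holomorphic functions). -/
abbrev CO : Type := UniformOnFun (↥uDisc) ℂ {K : Set (↥uDisc) | IsCompact K}

/-- The canonical map sending a function on `ℂ` to its restriction to the disc,
viewed in the compact-open topology. -/
def toCO (f : ℂ → ℂ) : CO :=
  UniformOnFun.ofFun {K : Set (↥uDisc) | IsCompact K} (fun z => f z.1)

/-- The compact-open topology induced on an abstract space of analytic functions
via the inclusion `ι`. -/
def coTopOn {E : Type} (ι : E → (ℂ → ℂ)) : TopologicalSpace E :=
  TopologicalSpace.induced (fun x => toCO (ι x)) inferInstance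

/-- Condition (I): the closed unit ball is compact in the compact-open topology. -/
def CondI {E : Type} [NormedAddCommGroup E] (ι : E → (ℂ → ℂ)) : Prop :=
  IsCompact ((fun x => toCO (ι x)) '' Metric.closedBall (0 : E) 1)

/-- The norm of the evaluation functional `δ_z` on the space realized via `ι`. -/
def evalNorm {E : Type} [NormedAddCommGroup E] (ι : E → (ℂ → ℂ)) (z : ℂ) : ℝ :=
  sSup ((fun x => ‖ι x z‖) '' Metric.closedBall (0 : E) 1)

/-- Condition (II): the norms of the evaluation functionals blow up at the boundary. -/
def CondII {E : Type} [NormedAddCommGroup E] (ι : E → (ℂ → ℂ)) : Prop :=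
  ∀ M : ℝ, ∃ s : ℝ, 0 ≤ s ∧ s < 1 ∧ ∀ z ∈ uDisc, s < ‖z‖ → M < evalNorm ι z

/-- The dilation `f_r(z) = f (r z)`. -/
def dil (r : ℝ) (f : ℂ → ℂ) : ℂ → ℂ := fun z => f ((r : ℂ) * z)

/-- Condition (III): the dilation operators `T_r` act compactly on the space. -/
def CondIII {E : Type} [NormedAddCommGroup E] [NormedSpace ℂ E] (ι : E →ₗ[ℂ] (ℂ → ℂ)) : Prop :=
  ∀ r : ℝ, 0 < r → r < 1 → ∃ T : E →L[ℂ] E,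
    (∀ x : E, Set.EqOn (ι (T x)) (dil r (ι x)) uDisc) ∧ IsCompactOperator (fun x : E => T x)

/-- Condition (IV): the dilation operators `T_r` are uniformly bounded on the space. -/
def CondIV {E : Type} [NormedAddCommGroup E] [NormedSpace ℂ E] (ι : E →ₗ[ℂ] (ℂ → ℂ)) : Prop :=
  ∃ M : ℝ, ∀ r : ℝ, 0 < r → r < 1 → ∃ T : E →L[ℂ] E,
    (∀ x : E, Set.EqOn (ι (T x)) (dil r (ι x)) uDisc) ∧ ‖T‖ ≤ M

/-- Condition (V): multiplication by a bounded analytic function `u` is bounded on the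
space, with norm controlled by `‖u‖_∞`. -/
def CondV {E : Type} [NormedAddCommGroup E] [NormedSpace ℂ E] (ι : E →ₗ[ℂ] (ℂ → ℂ)) : Prop :=
  ∃ C : ℝ, 0 < C ∧ ∀ (u : ℂ → ℂ) (b : ℝ), DifferentiableOn ℂ u uDisc →
    (∀ z ∈ uDisc, ‖u z‖ ≤ b) →
    ∃ T : E →L[ℂ] E,
      (∀ x : E, Set.EqOn (ι (T x)) (fun z => u z * ι x z) uDisc) ∧ ‖T‖ ≤ C * b

/-- The set of values `v(z)|f(z)|`, `z ∈ 𝔻`. -/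
def hvSet (v : ℂ → ℝ) (f : ℂ → ℂ) : Set ℝ := (fun z => v z * ‖f z‖) '' uDisc

/-- The norm of the weighted Banach space `H_v^∞`. -/
def hvNorm (v : ℂ → ℝ) (f : ℂ → ℂ) : ℝ := sSup (hvSet v f)

/-- Membership in the weighted Banach space `H_v^∞`. -/
def memHvInf (v : ℂ → ℝ) (f : ℂ → ℂ) : Prop :=
  DifferentiableOn ℂ f uDisc ∧ BddAbove (hvSet v f)

/-- `F(z) → 0` as `|z| → 1⁻`. -/
def vanishBd (F : ℂ → ℝ) : Prop :=
  ∀ ε : ℝ, 0 < ε → ∃ s : ℝ, 0 ≤ s ∧ s < 1 ∧ ∀ z ∈ uDisc, s < ‖z‖ → F z < ε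

/-- Membership in the space `H_v^0`. -/
def memHv0 (v : ℂ → ℝ) (f : ℂ → ℂ) : Prop :=
  memHvInf v f ∧ vanishBd (fun z => v z * ‖f z‖)

/-- The set of values `v(z)|f'(z)|`, `z ∈ 𝔻`. -/
def bvSet (v : ℂ → ℝ) (f : ℂ → ℂ) : Set ℝ := (fun z => v z * ‖deriv f z‖) '' uDisc

/-- The norm of the Bloch-type space `B_v^∞`. -/
def bvNorm (v : ℂ → ℝ) (f : ℂ → ℂ) : ℝ := ‖f 0‖ + sSup (bvSet v f)

/-- Membership in the Bloch-type space `B_v^∞`. -/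
def memBvInf (v : ℂ → ℝ) (f : ℂ → ℂ) : Prop :=
  DifferentiableOn ℂ f uDisc ∧ BddAbove (bvSet v f)

/-- Membership in the little Bloch-type space `B_v^0`. -/
def memBv0 (v : ℂ → ℝ) (f : ℂ → ℂ) : Prop :=
  memBvInf v f ∧ vanishBd (fun z => v z * ‖deriv f z‖)

/-- A weight: continuous, strictly positive on `𝔻`, vanishing at the boundary. -/
def IsWeight (v : ℂ → ℝ) : Prop :=
  ContinuousOn v uDisc ∧ (∀ z ∈ uDisc, 0 < v z) ∧ vanishBd v

/-- A normal weight. -/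
def IsNormalWeight (v : ℂ → ℝ) : Prop :=
  IsWeight v ∧ (∀ z ∈ uDisc, v z = v ((‖z‖ : ℝ) : ℂ)) ∧
  (∀ r s : ℝ, 0 ≤ r → r ≤ s → s < 1 → v ((s : ℂ)) ≤ v ((r : ℂ))) ∧
  (∃ k : ℕ, 1 ≤ k ∧
    Filter.limsup (fun n : ℕ =>
        v ((((1 : ℝ) - (2 : ℝ) ^ (-(n : ℤ) - (k : ℤ)) : ℝ) : ℂ)) /
        v ((((1 : ℝ) - (2 : ℝ) ^ (-(n : ℤ)) : ℝ) : ℂ))) Filter.atTop < 1) ∧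
  (∃ M : ℝ, ∀ n : ℕ,
    v ((((1 : ℝ) - (2 : ℝ) ^ (-(n : ℤ)) : ℝ) : ℂ)) /
    v ((((1 : ℝ) - (2 : ℝ) ^ (-(n : ℤ) - 1) : ℝ) : ℂ)) ≤ M)

/-- The standard weight `v_α(z) = (1 - |z|²)^α`. -/
def stdWeight (α : ℝ) : ℂ → ℝ := fun z => (1 - ‖z‖ ^ 2) ^ α

/-- The classical Volterra operator `T_g f (w) = ∫₀^w f(ξ) g'(ξ) dξ`. -/
def volterra (g f : ℂ → ℂ) (w : ℂ) : ℂ :=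
  w * ∫ t in (0:ℝ)..1, f ((t : ℂ) * w) * deriv g ((t : ℂ) * w)

/-- The generalized Volterra operator `T_g^φ f (z) = ∫₀^{φ(z)} f(ξ) g'(ξ) dξ`. -/
def genVolterra (g φ f : ℂ → ℂ) : ℂ → ℂ := fun z => volterra g f (φ z)

/-- An analytic selfmap of the unit disc. -/
def IsSelfMap (φ : ℂ → ℂ) : Prop :=
  DifferentiableOn ℂ φ uDisc ∧ Set.MapsTo φ uDisc uDisc

/-- `E`, embedded in `H(𝔻)` by `ι`, is (isometrically) the Banach space of analytic
functions with membership predicate `mem` and norm `nrm`. -/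
def RealizesSpace {E : Type} [NormedAddCommGroup E] [NormedSpace ℂ E]
    (ι : E →ₗ[ℂ] (ℂ → ℂ)) (mem : (ℂ → ℂ) → Prop) (nrm : (ℂ → ℂ) → ℝ) : Prop :=
  (∀ x y : E, Set.EqOn (ι x) (ι y) uDisc → x = y) ∧
  (∀ x : E, mem (ι x)) ∧
  (∀ f : ℂ → ℂ, mem f → ∃ x : E, Set.EqOn (ι x) f uDisc) ∧
  (∀ x : E, ‖x‖ = nrm (ι x))

/-- The weak topology of a normed space. -/
def wkTop (Y : Type) [NormedAddCommGroup Y] [NormedSpace ℂ Y] : TopologicalSpace Y :=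
  TopologicalSpace.induced (fun y : Y => (fun ℓ : Y →L[ℂ] ℂ => ℓ y)) Pi.topologicalSpace

/-- A map between normed spaces is weakly compact if the image of the closed unit ball
is relatively compact in the weak topology. -/
def WeaklyCompactOn {X Y : Type} [NormedAddCommGroup X] [NormedAddCommGroup Y]
    [NormedSpace ℂ Y] (T : X → Y) : Prop :=
  @IsCompact Y (wkTop Y) (@closure Y (wkTop Y) (T '' Metric.closedBall (0 : X) 1))

/-- The essential norm of a bounded operator: the distance to the compact operators. -/
def essNorm {X Y : Type} [NormedAddCommGroup X] [NormedSpace ℂ X]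
    [NormedAddCommGroup Y] [NormedSpace ℂ Y] (T : X →L[ℂ] Y) : ℝ :=
  sInf {c : ℝ | ∃ K : X →L[ℂ] Y, IsCompactOperator (fun x : X => K x) ∧ c = ‖T - K‖}

/-- `limsup_{|φ(z)| → 1} F(z)` (with the convention that it is `0` when `sup |φ| < 1`). -/
def limsupAtBd (φ : ℂ → ℂ) (F : ℂ → ℝ) : ℝ :=
  sInf {M : ℝ | ∃ s : ℝ, 0 ≤ s ∧ s < 1 ∧ ∀ z ∈ uDisc, s < ‖φ z‖ → F z ≤ M}

/-- The set of integral means defining the Hardy norm. -/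
def hpSet (p : ℝ) (f : ℂ → ℂ) : Set ℝ :=
  (fun r : ℝ => (2 * Real.pi)⁻¹ *
      ∫ θ in (0:ℝ)..(2 * Real.pi),
        ‖f ((r : ℂ) * Complex.exp ((θ : ℂ) * Complex.I))‖ ^ p) '' Set.Ico (0:ℝ) 1

/-- The Hardy space norm. -/
def hpNorm (p : ℝ) (f : ℂ → ℂ) : ℝ := sSup (hpSet p f) ^ (1 / p)

/-- Membership in the Hardy space `H^p`. -/
def memHp (p : ℝ) (f : ℂ → ℂ) : Prop :=
  DifferentiableOn ℂ f uDisc ∧ BddAbove (hpSet p f)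

/-- The Bergman integrand `|f(z)|^p (1-|z|²)^α`. -/
def bergFun (p α : ℝ) (f : ℂ → ℂ) : ℂ → ℝ :=
  fun z => ‖f z‖ ^ p * (1 - ‖z‖ ^ 2) ^ α

/-- The weighted Bergman space norm (with respect to normalized area measure). -/
def bergNorm (p α : ℝ) (f : ℂ → ℂ) : ℝ :=
  (Real.pi⁻¹ * ∫ z in uDisc, bergFun p α f z) ^ (1 / p)

/-- Membership in the weighted Bergman space `A_α^p`. -/
def memBerg (p α : ℝ) (f : ℂ → ℂ) : Prop :=
  DifferentiableOn ℂ f uDisc ∧ MeasureTheory.IntegrableOn (bergFun p α f) uDisc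

/-- The associated weight `ṽ` of a weight `v`. -/
def assocWeight (v : ℂ → ℝ) (z : ℂ) : ℝ :=
  (sSup ((fun f : ℂ → ℂ => ‖f z‖) ''
    {f : ℂ → ℂ | DifferentiableOn ℂ f uDisc ∧ ∀ w ∈ uDisc, v w * ‖f w‖ ≤ 1}))⁻¹

/-- The space `H(𝔻)` of holomorphic functions on the disc, with the compact-open
topology. -/
def HolD : Type := {f : ℂ → ℂ // DifferentiableOn ℂ f uDisc}

instance : TopologicalSpace HolD :=
  TopologicalSpace.induced (fun f : HolD => toCO f.1) inferInstance

instance : Fact ((1 : ENNReal) ≤ ⊤) := ⟨le_top⟩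

/-- The sequence space `ℓ^∞`. -/
abbrev ellInf : Type := lp (fun _ : ℕ => ℂ) ⊤

/-! Write `u = g ∘ φ` and `G = f_r ∘ φ`, a bounded holomorphic function; then
`(T_g^φ f_r)' = G u'`. In the Bloch case this gives `w |(T_g^φ f_r)'| ≤ ‖G‖_∞ w |u'|` at once.
In the `H_v^0` case, `k = T_g^φ f_r - G u` has `k' = -G' u`, and Cauchy's estimate
`(1 - |z|) |G'(z)| ≤ 2 ‖G‖_∞` gives `v(z) (1 - |z|) |k'(z)| → 0`. For a normal weight this
forces `v |k| → 0`: integrating `k'` radially over the dyadic annuli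
`1 - 2⁻ⁿ ≤ |z| ≤ 1 - 2⁻ⁿ⁻¹` bounds `v(z) |k(z)|` by a term vanishing with `v` plus
`o(1) · v(1 - 2⁻ᴺ) ∑_{n ≤ N} 1 / v(1 - 2⁻ⁿ⁻¹)`, and the two growth conditions on `v` keep
this sum bounded. -/

lemma mem_uDisc {z : ℂ} : z ∈ uDisc ↔ ‖z‖ < 1 := mem_ball_zero_iff

lemma isOpen_uDisc : IsOpen uDisc := isOpen_ball

lemma closedBall_subset_uDisc {s : ℝ} (hs : s < 1) : closedBall (0 : ℂ) s ⊆ uDisc :=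
  closedBall_subset_ball hs

def atDiscBoundary : Filter ℂ := comap (‖·‖) (𝓝[<] 1)

lemma eventually_atDiscBoundary_iff {p : ℂ → Prop} :
    (∀ᶠ z in atDiscBoundary, p z) ↔ ∃ s < 1, ∀ z : ℂ, s < ‖z‖ → ‖z‖ < 1 → p z := by
  simp only [atDiscBoundary, ((nhdsLT_basis (1 : ℝ)).comap _).eventually_iff,
    mem_preimage, mem_Ioo]
  exact exists_congr fun s => and_congr_right fun _ => forall_congr' fun z => and_imp

lemma eventually_mem_uDisc : ∀ᶠ z in atDiscBoundary, z ∈ uDisc :=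
  eventually_atDiscBoundary_iff.2 ⟨0, one_pos, fun _ _ hz => mem_uDisc.2 hz⟩

lemma eventually_lt_norm {s : ℝ} (hs : s < 1) : ∀ᶠ z in atDiscBoundary, s < ‖z‖ :=
  eventually_atDiscBoundary_iff.2 ⟨s, hs, fun _ hz _ => hz⟩

lemma vanishBd_iff_eventually_lt {F : ℂ → ℝ} :
    vanishBd F ↔ ∀ ε > 0, ∀ᶠ z in atDiscBoundary, F z < ε := by
  refine forall₂_congr fun ε _ => ⟨fun ⟨s, _, hs1, hs⟩ => ?_, fun h => ?_⟩
  · exact eventually_atDiscBoundary_iff.2 ⟨s, hs1, fun z hsz hz => hs z (mem_uDisc.2 hz) hsz⟩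
  · obtain ⟨s, hs1, hs⟩ := eventually_atDiscBoundary_iff.1 h
    exact ⟨max s 0, le_max_right _ _, max_lt hs1 one_pos,
      fun z hz hsz => hs z (lt_of_le_of_lt (le_max_left _ _) hsz) (mem_uDisc.1 hz)⟩

lemma vanishBd_of_tendsto {F : ℂ → ℝ} (h : Tendsto F atDiscBoundary (𝓝 0)) : vanishBd F :=
  vanishBd_iff_eventually_lt.2 fun _ hε => h.eventually (gt_mem_nhds hε)

lemma tendsto_of_vanishBd {F : ℂ → ℝ} (hF : ∀ z ∈ uDisc, 0 ≤ F z) (h : vanishBd F) :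
    Tendsto F atDiscBoundary (𝓝 0) :=
  tendsto_order.2 ⟨fun _ hε => eventually_mem_uDisc.mono fun z hz => hε.trans_le (hF z hz),
    vanishBd_iff_eventually_lt.1 h⟩

lemma bddAbove_image_of_tendsto {F : ℂ → ℝ} (hc : ContinuousOn F uDisc)
    (h : Tendsto F atDiscBoundary (𝓝 0)) : BddAbove (F '' uDisc) := by
  obtain ⟨s, hs1, hs⟩ := eventually_atDiscBoundary_iff.1 (h.eventually (gt_mem_nhds one_pos))
  obtain ⟨B, hB⟩ := (isCompact_closedBall (0 : ℂ) s).exists_bound_of_continuousOn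
    (hc.mono (closedBall_subset_uDisc hs1))
  refine ⟨max B 1, forall_mem_image.2 fun z hz => ?_⟩
  rcases le_or_gt ‖z‖ s with hzs | hzs
  · exact (le_abs_self _).trans ((hB z (mem_closedBall_zero_iff.2 hzs)).trans (le_max_left _ _))
  · exact (hs z hzs (mem_uDisc.1 hz)).le.trans (le_max_right _ _)

lemma memHv0_of_tendsto {v : ℂ → ℝ} {f : ℂ → ℂ} (hv : ContinuousOn v uDisc)
    (hf : DifferentiableOn ℂ f uDisc)
    (h : Tendsto (fun z => v z * ‖f z‖) atDiscBoundary (𝓝 0)) : memHv0 v f :=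
  ⟨⟨hf, bddAbove_image_of_tendsto (hv.mul hf.continuousOn.norm) h⟩, vanishBd_of_tendsto h⟩

lemma memBv0_of_tendsto {v : ℂ → ℝ} {f : ℂ → ℂ} (hv : ContinuousOn v uDisc)
    (hf : DifferentiableOn ℂ f uDisc)
    (h : Tendsto (fun z => v z * ‖deriv f z‖) atDiscBoundary (𝓝 0)) : memBv0 v f :=
  ⟨⟨hf, bddAbove_image_of_tendsto (hv.mul (hf.deriv isOpen_uDisc).continuousOn.norm) h⟩,
    vanishBd_of_tendsto h⟩

lemma hasDerivAt_mul_integral_comp_mul {H : ℂ → ℂ} {R : ℝ}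
    (hH : DifferentiableOn ℂ H (ball 0 R)) {w : ℂ} (hw : w ∈ ball (0 : ℂ) R) :
    HasDerivAt (fun x => x * ∫ t in (0 : ℝ)..1, H (t * x)) (H w) w := by
  obtain ⟨P, hP⟩ := hH.isExactOn_ball
  -- `x * ∫₀¹ H (t x) dt` is the integral of `P'` along the segment `[0, x]`
  have hprimitive : ∀ x ∈ ball (0 : ℂ) R, x * ∫ t in (0 : ℝ)..1, H (t * x) = P x - P 0 := by
    intro x hx
    have hseg : ∀ t ∈ uIcc (0 : ℝ) 1, (t : ℂ) * x ∈ ball (0 : ℂ) R := fun t ht => by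
      rw [uIcc_of_le zero_le_one] at ht
      rw [mem_ball_zero_iff, norm_mul, Complex.norm_real, Real.norm_of_nonneg ht.1]
      exact (mul_le_of_le_one_left (norm_nonneg x) ht.2).trans_lt (mem_ball_zero_iff.1 hx)
    have hderiv : ∀ t ∈ uIcc (0 : ℝ) 1,
        HasDerivAt (fun t : ℝ => P (t * x)) (H (t * x) * x) t := fun t ht =>
      ((hP _ (hseg t ht)).comp (t : ℂ) (hasDerivAt_mul_const x)).comp_ofReal
    have hcont : ContinuousOn (fun t : ℝ => H (t * x) * x) (uIcc 0 1) :=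
      (hH.continuousOn.comp (by fun_prop) hseg).mul continuousOn_const
    rw [mul_comm, ← intervalIntegral.integral_mul_const,
      intervalIntegral.integral_eq_sub_of_hasDerivAt hderiv hcont.intervalIntegrable]
    simp
  exact ((hP w hw).sub_const (P 0)).congr_of_eventuallyEq
    (eventually_of_mem (isOpen_ball.mem_nhds hw) hprimitive)

lemma hasDerivAt_volterra {g F : ℂ → ℂ} (hg : DifferentiableOn ℂ g uDisc)
    (hF : DifferentiableOn ℂ F uDisc) {w : ℂ} (hw : w ∈ uDisc) :
    HasDerivAt (volterra g F) (F w * deriv g w) w :=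
  hasDerivAt_mul_integral_comp_mul (H := fun ξ => F ξ * deriv g ξ)
    (hF.mul (hg.deriv isOpen_uDisc)) hw

lemma hasDerivAt_comp_selfMap {g φ : ℂ → ℂ} (hg : DifferentiableOn ℂ g uDisc)
    (hφ : IsSelfMap φ) {z : ℂ} (hz : z ∈ uDisc) :
    HasDerivAt (fun z => g (φ z)) (deriv g (φ z) * deriv φ z) z :=
  (hg.differentiableAt (isOpen_uDisc.mem_nhds (hφ.2 hz))).hasDerivAt.comp z
    (hφ.1.differentiableAt (isOpen_uDisc.mem_nhds hz)).hasDerivAt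

lemma hasDerivAt_genVolterra {g φ F : ℂ → ℂ} (hg : DifferentiableOn ℂ g uDisc)
    (hφ : IsSelfMap φ) (hF : DifferentiableOn ℂ F uDisc) {z : ℂ} (hz : z ∈ uDisc) :
    HasDerivAt (genVolterra g φ F) (F (φ z) * deriv (fun z => g (φ z)) z) z := by
  rw [(hasDerivAt_comp_selfMap hg hφ hz).deriv, ← mul_assoc]
  exact (hasDerivAt_volterra hg hF (hφ.2 hz)).comp z
    (hφ.1.differentiableAt (isOpen_uDisc.mem_nhds hz)).hasDerivAt

lemma norm_ofReal_mul_le {r : ℝ} {z : ℂ} (hz : z ∈ uDisc) : ‖(r : ℂ) * z‖ ≤ |r| := by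
  rw [norm_mul, Complex.norm_real, Real.norm_eq_abs]
  exact mul_le_of_le_one_right (abs_nonneg r) (mem_uDisc.1 hz).le

lemma dil_differentiableOn {f : ℂ → ℂ} (hf : DifferentiableOn ℂ f uDisc) {r : ℝ}
    (hr : |r| ≤ 1) : DifferentiableOn ℂ (dil r f) uDisc :=
  hf.comp (by fun_prop) fun z hz => by
    rw [mem_uDisc, norm_mul, Complex.norm_real, Real.norm_eq_abs]
    exact (mul_le_of_le_one_left (norm_nonneg z) hr).trans_lt (mem_uDisc.1 hz)

lemma exists_norm_dil_le {f : ℂ → ℂ} (hf : ContinuousOn f uDisc) {r : ℝ} (hr : |r| < 1) :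
    ∃ M, ∀ z ∈ uDisc, ‖dil r f z‖ ≤ M := by
  obtain ⟨M, hM⟩ := (isCompact_closedBall (0 : ℂ) |r|).exists_bound_of_continuousOn
    (hf.mono (closedBall_subset_uDisc hr))
  exact ⟨M, fun z hz => hM _ (mem_closedBall_zero_iff.2 (norm_ofReal_mul_le hz))⟩

lemma one_sub_norm_mul_norm_deriv_le {G : ℂ → ℂ} {M : ℝ} (hG : DifferentiableOn ℂ G uDisc)
    (hGM : ∀ z ∈ uDisc, ‖G z‖ ≤ M) {z : ℂ} (hz : z ∈ uDisc) :
    (1 - ‖z‖) * ‖deriv G z‖ ≤ 2 * M := by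
  have hz1 := mem_uDisc.1 hz
  set R := (1 - ‖z‖) / 2 with hR
  have hR0 : 0 < R := by linarith
  have hball : closedBall z R ⊆ uDisc := fun ζ hζ => by
    rw [mem_uDisc]
    calc ‖ζ‖ ≤ ‖ζ - z‖ + ‖z‖ := norm_le_norm_sub_add ζ z
      _ ≤ R + ‖z‖ := by gcongr; exact mem_closedBall_iff_norm.1 hζ
      _ < 1 := by linarith
  have hcauchy := Complex.norm_deriv_le_of_forall_mem_sphere_norm_le hR0
    (hG.diffContOnCl_ball hball) fun ζ hζ => hGM ζ (hball (sphere_subset_closedBall hζ))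
  calc (1 - ‖z‖) * ‖deriv G z‖ ≤ (1 - ‖z‖) * (M / R) := by gcongr
    _ = 2 * M := by rw [hR]; field_simp [(by linarith : 1 - ‖z‖ ≠ 0)]

lemma exists_forall_le_of_le_mul_add {s : ℕ → ℝ} {k N₀ : ℕ} {b c : ℝ} (hk : 0 < k)
    (hc0 : 0 ≤ c) (hc1 : c < 1) (h : ∀ n ≥ N₀, s (n + k) ≤ c * s n + b) : ∃ C, ∀ n, s n ≤ C := by
  obtain ⟨A, hA⟩ := ((finite_Iio (N₀ + k)).image s).bddAbove
  set C := max A (b / (1 - c))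
  have hb : b ≤ (1 - c) * C := by
    rw [← div_le_iff₀' (by linarith)]; exact le_max_right _ _
  refine ⟨C, fun n => ?_⟩
  induction n using Nat.strong_induction_on with
  | _ n ih =>
    rcases lt_or_ge n (N₀ + k) with hn | hn
    · exact (hA (mem_image_of_mem s hn)).trans (le_max_left _ _)
    · obtain ⟨m, rfl⟩ : ∃ m, n = m + k := ⟨n - k, by omega⟩
      calc s (m + k) ≤ c * s m + b := h m (by omega)
        _ ≤ c * C + (1 - c) * C := by gcongr; exact ih m (by omega)
        _ = C := by ring

lemma exists_sum_div_le_of_le_mul {a : ℕ → ℝ} (ha : ∀ n, 0 < a n) (hanti : Antitone a)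
    {k N₀ : ℕ} {c : ℝ} (hk : 0 < k) (hc0 : 0 ≤ c) (hc1 : c < 1)
    (hdecay : ∀ n ≥ N₀, a (n + k) ≤ c * a n) :
    ∃ C, ∀ N, ∑ m ∈ Finset.range (N + 1), a N / a m ≤ C := by
  refine exists_forall_le_of_le_mul_add hk hc0 hc1 (N₀ := N₀) (b := k) fun n (hn : N₀ ≤ n) => ?_
  rw [← Finset.sum_range_add_sum_Ico _ (by omega : n + 1 ≤ n + k + 1), Finset.mul_sum]
  gcongr
  · rw [mul_div_assoc']
    exact div_le_div_of_nonneg_right (hdecay n hn) (ha _).le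
  · calc ∑ m ∈ Finset.Ico (n + 1) (n + k + 1), a (n + k) / a m
        ≤ ∑ _m ∈ Finset.Ico (n + 1) (n + k + 1), (1 : ℝ) :=
          Finset.sum_le_sum fun m hm => div_le_one_of_le₀
            (hanti (by rw [Finset.mem_Ico] at hm; omega)) (ha m).le
      _ = k := by simp

def dyadicRadius (n : ℕ) : ℝ := 1 - 2⁻¹ ^ n

lemma dyadicRadius_nonneg (n : ℕ) : 0 ≤ dyadicRadius n :=
  sub_nonneg.2 (pow_le_one₀ (by norm_num) (by norm_num))

lemma dyadicRadius_lt_one (n : ℕ) : dyadicRadius n < 1 :=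
  sub_lt_self _ (by positivity)

lemma dyadicRadius_strictMono : StrictMono dyadicRadius := fun _ _ h =>
  sub_lt_sub_left (pow_lt_pow_right_of_lt_one₀ (by norm_num) (by norm_num) h) 1

lemma dyadicRadius_succ_sub (n : ℕ) :
    dyadicRadius (n + 1) - dyadicRadius n = 1 - dyadicRadius (n + 1) := by
  simp only [dyadicRadius, pow_succ]; ring

lemma exists_lt_dyadicRadius {s : ℝ} (hs : s < 1) : ∃ n, s < dyadicRadius n := by
  obtain ⟨n, hn⟩ := exists_pow_lt_of_lt_one (sub_pos.2 hs) (by norm_num : (2⁻¹ : ℝ) < 1)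
  exact ⟨n, by rw [dyadicRadius]; linarith⟩

lemma exists_dyadicRadius_le_lt {ρ : ℝ} (h0 : 0 ≤ ρ) (h1 : ρ < 1) :
    ∃ N, dyadicRadius N ≤ ρ ∧ ρ < dyadicRadius (N + 1) := by
  classical
  have hex := exists_lt_dyadicRadius h1
  obtain ⟨N, hN⟩ : ∃ N, Nat.find hex = N + 1 :=
    Nat.exists_eq_succ_of_ne_zero fun h0' => by
      have := Nat.find_spec hex
      rw [h0', dyadicRadius, pow_zero, sub_self] at this
      linarith
  exact ⟨N, not_lt.1 (Nat.find_min hex (by omega)), hN ▸ Nat.find_spec hex⟩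

lemma two_zpow_neg_natCast (n : ℕ) : (2 : ℝ) ^ (-(n : ℤ)) = 2⁻¹ ^ n := by
  rw [zpow_neg, zpow_natCast, inv_pow]

section NormalWeight

variable {v : ℂ → ℝ}

lemma IsNormalWeight.antitone_norm (hv : IsNormalWeight v) {x y : ℂ} (hy : y ∈ uDisc)
    (hxy : ‖x‖ ≤ ‖y‖) : v y ≤ v x := by
  rw [hv.2.1 y hy, hv.2.1 x (mem_uDisc.2 (hxy.trans_lt (mem_uDisc.1 hy)))]
  exact hv.2.2.1 _ _ (norm_nonneg x) hxy (mem_uDisc.1 hy)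

def dyadicWeight (v : ℂ → ℝ) (n : ℕ) : ℝ := v (dyadicRadius n)

lemma norm_dyadicRadius (n : ℕ) : ‖(dyadicRadius n : ℂ)‖ = dyadicRadius n := by
  rw [Complex.norm_real, Real.norm_of_nonneg (dyadicRadius_nonneg n)]

lemma dyadicRadius_mem_uDisc (n : ℕ) : (dyadicRadius n : ℂ) ∈ uDisc :=
  mem_uDisc.2 ((norm_dyadicRadius n).trans_lt (dyadicRadius_lt_one n))

lemma dyadicWeight_pos (hv : IsWeight v) (n : ℕ) : 0 < dyadicWeight v n :=
  hv.2.1 _ (dyadicRadius_mem_uDisc n)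

lemma dyadicWeight_antitone (hv : IsNormalWeight v) : Antitone (dyadicWeight v) :=
  fun m n h => hv.antitone_norm (dyadicRadius_mem_uDisc n)
    (by simpa only [norm_dyadicRadius] using dyadicRadius_strictMono.monotone h)

lemma weight_one_sub_two_zpow (v : ℂ → ℝ) (n : ℕ) :
    v ((((1 : ℝ) - (2 : ℝ) ^ (-(n : ℤ)) : ℝ) : ℂ)) = dyadicWeight v n := by
  rw [two_zpow_neg_natCast]; rfl

lemma exists_dyadicWeight_le_mul_succ (hv : IsNormalWeight v) :
    ∃ M, 0 ≤ M ∧ ∀ n, dyadicWeight v n ≤ M * dyadicWeight v (n + 1) := by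
  obtain ⟨M, hM⟩ := hv.2.2.2.2
  refine ⟨max M 0, le_max_right _ _, fun n => ?_⟩
  have h := hM n
  rw [show -(n : ℤ) - 1 = -((n + 1 : ℕ) : ℤ) by push_cast; ring, weight_one_sub_two_zpow v,
    weight_one_sub_two_zpow v, div_le_iff₀ (dyadicWeight_pos hv.1 _)] at h
  exact h.trans (by gcongr; exacts [(dyadicWeight_pos hv.1 _).le, le_max_left _ _])

lemma exists_dyadicWeight_add_le_mul (hv : IsNormalWeight v) :
    ∃ k N₀ : ℕ, ∃ c : ℝ, 0 < k ∧ 0 ≤ c ∧ c < 1 ∧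
      ∀ n ≥ N₀, dyadicWeight v (n + k) ≤ c * dyadicWeight v n := by
  obtain ⟨k, hk, hlim⟩ := hv.2.2.2.1
  simp only [show ∀ n : ℕ, -(n : ℤ) - k = -((n + k : ℕ) : ℤ) from fun n => by push_cast; ring,
    weight_one_sub_two_zpow] at hlim
  obtain ⟨c, hLc, hc1⟩ := exists_between hlim
  have hratio : ∀ n, dyadicWeight v (n + k) / dyadicWeight v n ≤ 1 := fun n =>
    div_le_one_of_le₀ (dyadicWeight_antitone hv (Nat.le_add_right n k))
      (dyadicWeight_pos hv.1 n).le
  obtain ⟨N₀, hN₀⟩ := eventually_atTop.1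
    (eventually_lt_of_limsup_lt hLc (isBoundedUnder_of ⟨1, hratio⟩))
  refine ⟨k, N₀, max c 0, hk, le_max_right _ _, max_lt hc1 one_pos, fun n hn => ?_⟩
  have h := (hN₀ n hn).le
  rw [div_le_iff₀ (dyadicWeight_pos hv.1 n)] at h
  exact h.trans (by gcongr; exacts [(dyadicWeight_pos hv.1 _).le, le_max_left _ _])

/-- Discrete form of `sup_ρ v(ρ) ∫₀^ρ ds / (v(s) (1 - s)) < ∞`. -/
lemma exists_dyadicWeight_mul_sum_inv_le (hv : IsNormalWeight v) :
    ∃ C, ∀ N, dyadicWeight v N * ∑ n ∈ Finset.range (N + 1), (dyadicWeight v (n + 1))⁻¹ ≤ C := by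
  obtain ⟨M, hM0, hM⟩ := exists_dyadicWeight_le_mul_succ hv
  obtain ⟨k, N₀, c, hk, hc0, hc1, hdecay⟩ := exists_dyadicWeight_add_le_mul hv
  obtain ⟨C, hC⟩ := exists_sum_div_le_of_le_mul (dyadicWeight_pos hv.1)
    (dyadicWeight_antitone hv) hk hc0 hc1 hdecay
  have hpos := dyadicWeight_pos hv.1
  refine ⟨M * C, fun N => ?_⟩
  calc dyadicWeight v N * ∑ n ∈ Finset.range (N + 1), (dyadicWeight v (n + 1))⁻¹
      ≤ M * dyadicWeight v (N + 1) * ∑ n ∈ Finset.range (N + 1), (dyadicWeight v (n + 1))⁻¹ := by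
        gcongr
        · exact Finset.sum_nonneg fun n _ => (inv_pos.2 (hpos _)).le
        · exact hM N
    _ = M * ∑ n ∈ Finset.range (N + 1), dyadicWeight v (N + 1) / dyadicWeight v (n + 1) := by
        simp only [div_eq_mul_inv, Finset.mul_sum, mul_assoc]
    _ ≤ M * ∑ m ∈ Finset.range (N + 1 + 1), dyadicWeight v (N + 1) / dyadicWeight v m := by
        rw [Finset.sum_range_succ' _ (N + 1)]
        gcongr
        exact le_add_of_nonneg_right (div_nonneg (hpos _).le (hpos _).le)
    _ ≤ M * C := by gcongr; exact hC (N + 1)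

lemma norm_ofReal_mul_of_norm_eq_one {s : ℝ} (hs : 0 ≤ s) {e : ℂ} (he : ‖e‖ = 1) :
    ‖(s : ℂ) * e‖ = s := by
  rw [norm_mul, he, mul_one, Complex.norm_real, Real.norm_of_nonneg hs]

variable {k : ℂ → ℂ}

lemma norm_sub_le_of_weighted_deriv_le (hv : IsNormalWeight v)
    (hk : DifferentiableOn ℂ k uDisc) {ε : ℝ} (hε : 0 ≤ ε) {a b : ℝ} (ha : 0 ≤ a) (hb : b < 1)
    (hbound : ∀ x ∈ uDisc, a ≤ ‖x‖ → v x * ((1 - ‖x‖) * ‖deriv k x‖) ≤ ε)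
    {e : ℂ} (he : ‖e‖ = 1) {c : ℝ} (hc : c ∈ Icc a b) :
    ‖k (c * e) - k (a * e)‖ ≤ ε / (v b * (1 - b)) * (b - a) := by
  have hb0 : 0 ≤ b := ha.trans (hc.1.trans hc.2)
  have hnormb : ‖(b : ℂ)‖ = b := by rw [Complex.norm_real, Real.norm_of_nonneg hb0]
  have hbD : (b : ℂ) ∈ uDisc := mem_uDisc.2 (hnormb.trans_lt hb)
  have hvb : 0 < v b * (1 - b) := mul_pos (hv.1.2.1 _ hbD) (sub_pos.2 hb)
  have hmem : ∀ s ∈ Icc a b, (s : ℂ) * e ∈ uDisc := fun s hs => by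
    rw [mem_uDisc, norm_ofReal_mul_of_norm_eq_one (ha.trans hs.1) he]
    exact hs.2.trans_lt hb
  have hderiv : ∀ s ∈ Icc a b, HasDerivWithinAt (fun s : ℝ => k (s * e))
      (deriv k (s * e) * e) (Icc a b) s := fun s hs =>
    (((hk.differentiableAt (isOpen_uDisc.mem_nhds (hmem s hs))).hasDerivAt.comp (s : ℂ)
      (hasDerivAt_mul_const e)).comp_ofReal).hasDerivWithinAt
  have hderiv_le : ∀ s ∈ Ico a b, ‖deriv k (s * e) * e‖ ≤ ε / (v b * (1 - b)) := by
    intro s hs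
    have hsD := hmem s (Ico_subset_Icc_self hs)
    have hnorm := norm_ofReal_mul_of_norm_eq_one (ha.trans hs.1) he
    have hweight : v b ≤ v (s * e) := hv.antitone_norm hbD (by rw [hnorm, hnormb]; exact hs.2.le)
    have hval := hbound _ hsD (by rw [hnorm]; exact hs.1)
    rw [hnorm] at hval
    rw [norm_mul, he, mul_one, le_div_iff₀ hvb]
    calc ‖deriv k (s * e)‖ * (v b * (1 - b)) ≤ ‖deriv k (s * e)‖ * (v (s * e) * (1 - s)) := by
          have := hv.1.2.1 _ hsD
          gcongr; exact hs.2.le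
      _ ≤ ε := by linarith
  calc ‖k (c * e) - k (a * e)‖ ≤ ε / (v b * (1 - b)) * (c - a) :=
        norm_image_sub_le_of_norm_deriv_le_segment' hderiv hderiv_le c hc
    _ ≤ ε / (v b * (1 - b)) * (b - a) := by
        have := div_nonneg hε hvb.le
        gcongr
        exact hc.2

lemma norm_sub_le_on_dyadic_annulus (hv : IsNormalWeight v) (hk : DifferentiableOn ℂ k uDisc)
    {ε : ℝ} (hε : 0 ≤ ε) {n : ℕ}
    (hbound : ∀ x ∈ uDisc, dyadicRadius n ≤ ‖x‖ → v x * ((1 - ‖x‖) * ‖deriv k x‖) ≤ ε)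
    {e : ℂ} (he : ‖e‖ = 1) {c : ℝ} (hc : c ∈ Icc (dyadicRadius n) (dyadicRadius (n + 1))) :
    ‖k (c * e) - k (dyadicRadius n * e)‖ ≤ ε / dyadicWeight v (n + 1) := by
  have h := norm_sub_le_of_weighted_deriv_le hv hk hε (dyadicRadius_nonneg n)
    (dyadicRadius_lt_one (n + 1)) hbound he hc
  have hgap : 1 - dyadicRadius (n + 1) ≠ 0 := (sub_pos.2 (dyadicRadius_lt_one _)).ne'
  rwa [dyadicRadius_succ_sub, ← div_div, div_mul_cancel₀ _ hgap] at h

lemma norm_dyadicRadius_mul_le (hv : IsNormalWeight v) (hk : DifferentiableOn ℂ k uDisc)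
    {ε B : ℝ} (hε : 0 ≤ ε) {N₁ : ℕ}
    (hbound : ∀ x ∈ uDisc, dyadicRadius N₁ ≤ ‖x‖ → v x * ((1 - ‖x‖) * ‖deriv k x‖) ≤ ε)
    (hB : ∀ x : ℂ, ‖x‖ ≤ dyadicRadius N₁ → ‖k x‖ ≤ B) {e : ℂ} (he : ‖e‖ = 1) {N : ℕ}
    (hN : N₁ ≤ N) :
    ‖k (dyadicRadius N * e)‖ ≤ B + ε * ∑ n ∈ Finset.Ico N₁ N, (dyadicWeight v (n + 1))⁻¹ := by
  induction N, hN using Nat.le_induction with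
  | base => simpa using hB _ (norm_ofReal_mul_of_norm_eq_one (dyadicRadius_nonneg _) he).le
  | succ N hN ih =>
    have hstep := norm_sub_le_on_dyadic_annulus hv hk hε
      (fun x hx hNx => hbound x hx ((dyadicRadius_strictMono.monotone hN).trans hNx)) he
      (right_mem_Icc.2 (dyadicRadius_strictMono.monotone N.le_succ))
    rw [Finset.sum_Ico_succ_top hN, mul_add, ← add_assoc, ← div_eq_mul_inv]
    exact (norm_le_norm_add_norm_sub' _ _).trans (add_le_add ih hstep)

lemma norm_le_of_mem_dyadic_annulus (hv : IsNormalWeight v) (hk : DifferentiableOn ℂ k uDisc)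
    {ε B : ℝ} (hε : 0 ≤ ε) {N₁ : ℕ}
    (hbound : ∀ x ∈ uDisc, dyadicRadius N₁ ≤ ‖x‖ → v x * ((1 - ‖x‖) * ‖deriv k x‖) ≤ ε)
    (hB : ∀ x : ℂ, ‖x‖ ≤ dyadicRadius N₁ → ‖k x‖ ≤ B) {z : ℂ} {N : ℕ} (hN : N₁ ≤ N)
    (hzN : ‖z‖ ∈ Icc (dyadicRadius N) (dyadicRadius (N + 1))) :
    ‖k z‖ ≤ B + ε * ∑ n ∈ Finset.range (N + 1), (dyadicWeight v (n + 1))⁻¹ := by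
  have he := Complex.norm_exp_ofReal_mul_I (arg z)
  have hstep := norm_sub_le_on_dyadic_annulus hv hk hε
    (fun x hx hNx => hbound x hx ((dyadicRadius_strictMono.monotone hN).trans hNx)) he hzN
  rw [Complex.norm_mul_exp_arg_mul_I] at hstep
  calc ‖k z‖ ≤ B + ε * ∑ n ∈ Finset.Ico N₁ (N + 1), (dyadicWeight v (n + 1))⁻¹ := by
        rw [Finset.sum_Ico_succ_top hN, mul_add, ← add_assoc, ← div_eq_mul_inv]
        exact (norm_le_norm_add_norm_sub' _ _).trans
          (add_le_add (norm_dyadicRadius_mul_le hv hk hε hbound hB he hN) hstep)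
    _ ≤ B + ε * ∑ n ∈ Finset.range (N + 1), (dyadicWeight v (n + 1))⁻¹ := by
        gcongr
        · exact fun n _ _ => (inv_pos.2 (dyadicWeight_pos hv.1 _)).le
        · exact fun n hn => Finset.mem_range.2 (Finset.mem_Ico.1 hn).2

theorem tendsto_weight_mul_norm_of_tendsto_deriv (hv : IsNormalWeight v)
    (hk : DifferentiableOn ℂ k uDisc)
    (h : Tendsto (fun z => v z * ((1 - ‖z‖) * ‖deriv k z‖)) atDiscBoundary (𝓝 0)) :
    Tendsto (fun z => v z * ‖k z‖) atDiscBoundary (𝓝 0) := by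
  have hv0 : ∀ z ∈ uDisc, 0 ≤ v z := fun z hz => (hv.1.2.1 z hz).le
  obtain ⟨C, hC⟩ := exists_dyadicWeight_mul_sum_inv_le hv
  refine tendsto_of_vanishBd (fun z hz => mul_nonneg (hv0 z hz) (norm_nonneg _))
    (vanishBd_iff_eventually_lt.2 fun ε hε => ?_)
  set ε' := ε / (2 * max C 1)
  have hε' : 0 < ε' := by positivity
  obtain ⟨s, hs1, hs⟩ := eventually_atDiscBoundary_iff.1 (h.eventually (gt_mem_nhds hε'))
  obtain ⟨N₁, hN₁⟩ := exists_lt_dyadicRadius hs1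
  obtain ⟨B, hB⟩ := (isCompact_closedBall (0 : ℂ) (dyadicRadius N₁)).exists_bound_of_continuousOn
    (hk.continuousOn.mono (closedBall_subset_uDisc (dyadicRadius_lt_one N₁)))
  have hvB : Tendsto (fun z => v z * B) atDiscBoundary (𝓝 0) := by
    simpa using (tendsto_of_vanishBd hv0 hv.1.2.2).mul_const B
  filter_upwards [hvB.eventually (gt_mem_nhds (half_pos hε)), eventually_mem_uDisc,
    eventually_lt_norm (dyadicRadius_lt_one N₁)] with z hvBz hz hN₁z
  obtain ⟨N, hNz, hzN⟩ := exists_dyadicRadius_le_lt (norm_nonneg z) (mem_uDisc.1 hz)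
  have hN : N₁ ≤ N := Nat.lt_succ_iff.1 (dyadicRadius_strictMono.lt_iff_lt.1 (hN₁z.trans hzN))
  have hkz := norm_le_of_mem_dyadic_annulus hv hk hε'.le
    (fun x hx hNx => (hs x (hN₁.trans_le hNx) (mem_uDisc.1 hx)).le)
    (fun x hx => hB x (mem_closedBall_zero_iff.2 hx)) hN ⟨hNz, hzN.le⟩
  set S := ∑ n ∈ Finset.range (N + 1), (dyadicWeight v (n + 1))⁻¹
  have hS : 0 ≤ S := Finset.sum_nonneg fun n _ => (inv_pos.2 (dyadicWeight_pos hv.1 _)).le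
  have hvz : v z ≤ dyadicWeight v N :=
    hv.antitone_norm hz (by rw [norm_dyadicRadius]; exact hNz)
  calc v z * ‖k z‖ ≤ v z * (B + ε' * S) := mul_le_mul_of_nonneg_left hkz (hv0 z hz)
    _ = v z * B + ε' * (v z * S) := by ring
    _ ≤ v z * B + ε' * max C 1 := by
        gcongr
        exact (mul_le_mul_of_nonneg_right hvz hS).trans ((hC N).trans (le_max_left _ _))
    _ < ε / 2 + ε / 2 := by
        have : ε' * max C 1 = ε / 2 := by simp only [ε']; field_simp
        linarith
    _ = ε := add_halves ε

end NormalWeight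

theorem memHv0_of_hasDerivAt_mul {v : ℂ → ℝ} (hv : IsNormalWeight v) {u h G : ℂ → ℂ} {M : ℝ}
    (hu : memHv0 v u) (hG : DifferentiableOn ℂ G uDisc) (hGM : ∀ z ∈ uDisc, ‖G z‖ ≤ M)
    (hh : ∀ z ∈ uDisc, HasDerivAt h (G z * deriv u z) z) : memHv0 v h := by
  have hv0 : ∀ z ∈ uDisc, 0 ≤ v z := fun z hz => (hv.1.2.1 z hz).le
  have hu0 : Tendsto (fun z => v z * ‖u z‖) atDiscBoundary (𝓝 0) :=
    tendsto_of_vanishBd (fun z hz => mul_nonneg (hv0 z hz) (norm_nonneg _)) hu.2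
  set k := fun z => h z - G z * u z
  have hk : ∀ z ∈ uDisc, HasDerivAt k (-(deriv G z * u z)) z := fun z hz => by
    have hG' := (hG.differentiableAt (isOpen_uDisc.mem_nhds hz)).hasDerivAt
    have hu' := (hu.1.1.differentiableAt (isOpen_uDisc.mem_nhds hz)).hasDerivAt
    exact ((hh z hz).sub (hG'.mul hu')).congr_deriv (by ring)
  have hk0 : Tendsto (fun z => v z * ‖k z‖) atDiscBoundary (𝓝 0) := by
    refine tendsto_weight_mul_norm_of_tendsto_deriv hv
      (fun z hz => (hk z hz).differentiableAt.differentiableWithinAt)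
      (squeeze_zero' (eventually_mem_uDisc.mono fun z hz => ?_)
        (eventually_mem_uDisc.mono fun z hz => ?_) (by simpa using hu0.const_mul (2 * M)))
    · have := hv0 z hz
      have := mem_uDisc.1 hz
      have : 0 ≤ 1 - ‖z‖ := by linarith
      positivity
    calc v z * ((1 - ‖z‖) * ‖deriv k z‖)
        = v z * ((1 - ‖z‖) * ‖deriv G z‖) * ‖u z‖ := by
          rw [(hk z hz).deriv, norm_neg, norm_mul]; ring
      _ ≤ v z * (2 * M) * ‖u z‖ := mul_le_mul_of_nonneg_right
          (mul_le_mul_of_nonneg_left (one_sub_norm_mul_norm_deriv_le hG hGM hz) (hv0 z hz))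
          (norm_nonneg _)
      _ = 2 * M * (v z * ‖u z‖) := by ring
  refine memHv0_of_tendsto hv.1.1 (fun z hz => (hh z hz).differentiableAt.differentiableWithinAt)
    (squeeze_zero' (eventually_mem_uDisc.mono fun z hz => by have := hv0 z hz; positivity)
      (eventually_mem_uDisc.mono fun z hz => ?_) (by simpa using hk0.add (hu0.const_mul M)))
  calc v z * ‖h z‖ = v z * ‖k z + G z * u z‖ := by simp [k]
    _ ≤ v z * (‖k z‖ + M * ‖u z‖) := by
        gcongr
        · exact hv0 z hz
        · exact (norm_add_le _ _).trans (by rw [norm_mul]; gcongr; exact hGM z hz)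
    _ = v z * ‖k z‖ + M * (v z * ‖u z‖) := by ring

theorem memBv0_of_hasDerivAt_mul {w : ℂ → ℝ} (hw : IsWeight w) {u h G : ℂ → ℂ} {M : ℝ}
    (hu : memBv0 w u) (hGM : ∀ z ∈ uDisc, ‖G z‖ ≤ M)
    (hh : ∀ z ∈ uDisc, HasDerivAt h (G z * deriv u z) z) : memBv0 w h := by
  have hw0 : ∀ z ∈ uDisc, 0 ≤ w z := fun z hz => (hw.2.1 z hz).le
  have hu0 : Tendsto (fun z => w z * ‖deriv u z‖) atDiscBoundary (𝓝 0) :=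
    tendsto_of_vanishBd (fun z hz => mul_nonneg (hw0 z hz) (norm_nonneg _)) hu.2
  refine memBv0_of_tendsto hw.1 (fun z hz => (hh z hz).differentiableAt.differentiableWithinAt)
    (squeeze_zero' (eventually_mem_uDisc.mono fun z hz => by have := hw0 z hz; positivity)
      (eventually_mem_uDisc.mono fun z hz => ?_) (by simpa using hu0.const_mul M))
  rw [(hh z hz).deriv, norm_mul, mul_left_comm]
  exact mul_le_mul_of_nonneg_right (hGM z hz) (mul_nonneg (hw0 z hz) (norm_nonneg _))

/-- If `g ∘ φ ∈ H_v^0` (`v` normal), then `T_g^φ(f_r) ∈ H_v^0` for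
every `f ∈ H(𝔻)` and `0 < r < 1`; likewise if `g ∘ φ ∈ B_w^0` for any weight `w`, then
`T_g^φ(f_r) ∈ B_w^0`. -/
theorem genVolterra_dilation_mem_little_spaces
    (φ g : ℂ → ℂ) (hφ : IsSelfMap φ) (hg : DifferentiableOn ℂ g uDisc)
    (v : ℂ → ℝ) (hv : IsNormalWeight v) (w : ℂ → ℝ) (hw : IsWeight w) :
    (memHv0 v (fun z => g (φ z)) →
      ∀ f : ℂ → ℂ, DifferentiableOn ℂ f uDisc → ∀ r : ℝ, 0 < r → r < 1 →
        memHv0 v (genVolterra g φ (dil r f))) ∧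
    (memBv0 w (fun z => g (φ z)) →
      ∀ f : ℂ → ℂ, DifferentiableOn ℂ f uDisc → ∀ r : ℝ, 0 < r → r < 1 →
        memBv0 w (genVolterra g φ (dil r f))) := by
  have key : ∀ f : ℂ → ℂ, DifferentiableOn ℂ f uDisc → ∀ r : ℝ, 0 < r → r < 1 →
      ∃ M, (∀ z ∈ uDisc, ‖dil r f (φ z)‖ ≤ M) ∧
        DifferentiableOn ℂ (fun z => dil r f (φ z)) uDisc ∧
        ∀ z ∈ uDisc, HasDerivAt (genVolterra g φ (dil r f))
          (dil r f (φ z) * deriv (fun z => g (φ z)) z) z := by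
    intro f hf r hr0 hr1
    have hr : |r| < 1 := abs_lt.2 ⟨by linarith, hr1⟩
    have hF := dil_differentiableOn hf hr.le
    obtain ⟨M, hM⟩ := exists_norm_dil_le hf.continuousOn hr
    exact ⟨M, fun z hz => hM _ (hφ.2 hz), hF.comp hφ.1 hφ.2,
      fun z hz => hasDerivAt_genVolterra hg hφ hF hz⟩
  refine ⟨fun hmem f hf r hr0 hr1 => ?_, fun hmem f hf r hr0 hr1 => ?_⟩
  · obtain ⟨M, hM, hGd, hh⟩ := key f hf r hr0 hr1
    exact memHv0_of_hasDerivAt_mul hv hmem hGd hM hh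
  · obtain ⟨M, hM, -, hh⟩ := key f hf r hr0 hr1
    exact memBv0_of_hasDerivAt_mul hw hmem hM hh
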